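/- Let π be a group with involution ḡ = g⁻¹ on Zπ, and suppose π is infinite with H¹(π;Zπ) = 0. Then the restriction map Hom_{Zπ}(Zπ, (Zπ)*) → Hom_{Zπ}(Iπ, (Iπ)*) is an isomorphism, and under the identification Hom_{Zπ}(Zπ,(Zπ)*) ≅ Zπ (evaluating at (1,1)) the involution f ↦ f* on pairings corresponds to the involution a ↦ ā on Zπ. In particular, every sesquilinear pairing on Iπ extends uniquely to a sesquilinear pairing on Zπ, and hermitian pairings on Iπ correspond to elements a ∈ Zπ with a = ā. -/

import Mathlib

/-- The involution of the group ring `ℤπ` induced by `g ↦ g⁻¹`. -/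
def conjGR (π : Type) [Group π] (x : MonoidAlgebra ℤ π) : MonoidAlgebra ℤ π :=
  MonoidAlgebra.ofCoeff (Finsupp.equivMapDomain (Equiv.inv π) x.coeff)

/-- A pairing `λ : M × M → ℤπ` is sesquilinear if it is biadditive,
left `ℤπ`-linear in the first variable and conjugate-linear in the second. -/
def IsSesq (π : Type) [Group π] {M : Type} [AddCommGroup M]
    [Module (MonoidAlgebra ℤ π) M] (lam : M → M → MonoidAlgebra ℤ π) : Prop :=
  (∀ x x' y, lam (x + x') y = lam x y + lam x' y) ∧
  (∀ x y y', lam x (y + y') = lam x y + lam x y') ∧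
  (∀ (a : MonoidAlgebra ℤ π) (x y), lam (a • x) y = a * lam x y) ∧
  (∀ (a : MonoidAlgebra ℤ π) (x y), lam x (a • y) = lam x y * conjGR π a)

/-- A pairing is hermitian if `λ(x,y) = conj (λ(y,x))`. -/
def IsHermitian (π : Type) [Group π] {M : Type} [AddCommGroup M]
    [Module (MonoidAlgebra ℤ π) M] (lam : M → M → MonoidAlgebra ℤ π) : Prop :=
  ∀ x y, lam x y = conjGR π (lam y x)

/-- A hermitian form is even if `λ = q + q*` for some sesquilinear `q`. -/
def IsEvenForm (π : Type) [Group π] {M : Type} [AddCommGroup M]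
    [Module (MonoidAlgebra ℤ π) M] (lam : M → M → MonoidAlgebra ℤ π) : Prop :=
  ∃ q : M → M → MonoidAlgebra ℤ π, IsSesq π q ∧
    ∀ x y, lam x y = q x y + conjGR π (q y x)

/-- The additive subgroup of `ℤπ` generated by the elements `g - g⁻¹`; the target
of quadratic refinements is the quotient `ℤπ/{g - g⁻¹}`. -/
noncomputable def oddRel (π : Type) [Group π] : AddSubgroup (MonoidAlgebra ℤ π) :=
  AddSubgroup.closure
    {x | ∃ g : π, x = MonoidAlgebra.of ℤ π g - MonoidAlgebra.of ℤ π g⁻¹}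

/-- A quadratic refinement of `λ` is a map `μ : M → ℤπ/{g - g⁻¹}` (given here by
a lift `μ : M → ℤπ`, with the relevant identities holding modulo `{g - g⁻¹}`)
such that `λ(x,x) = μ(x) + conj μ(x)`, `μ(x+y) = μ(x) + μ(y) + [λ(x,y)]` and
`μ(a·x) = a·μ(x)·conj a`. -/
def HasQuadRef (π : Type) [Group π] {M : Type} [AddCommGroup M]
    [Module (MonoidAlgebra ℤ π) M] (lam : M → M → MonoidAlgebra ℤ π) : Prop :=
  ∃ μ : M → MonoidAlgebra ℤ π,
    (∀ x, lam x x = μ x + conjGR π (μ x)) ∧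
    (∀ x y, μ (x + y) - μ x - μ y - lam x y ∈ oddRel π) ∧
    (∀ (a : MonoidAlgebra ℤ π) (x), μ (a • x) - a * μ x * conjGR π a ∈ oddRel π)

/-- The augmentation ring homomorphism `ℤπ → ℤ`. -/
noncomputable def aug (π : Type) [Group π] : MonoidAlgebra ℤ π →+* ℤ :=
  ((MonoidAlgebra.lift ℤ ℤ π) 1).toRingHom

/-- The augmentation ideal `Iπ = ker(ε : ℤπ → ℤ)`. -/
noncomputable def Ipi (π : Type) [Group π] : Ideal (MonoidAlgebra ℤ π) :=
  RingHom.ker (aug π)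

/-!
Since `H¹(π; ℤπ) = 0`, every `ℤπ`-linear map `φ : Iπ → ℤπ` is right multiplication by some
`m`: `g ↦ φ (g - 1)` is a 1-cocycle, hence of the form `g ↦ (g - 1) m`, and the elements `g - 1`
generate `Iπ`. Since `π` is infinite, the right annihilator of `Iπ` is zero, so `m` is unique.
Applied in each variable in turn, this writes a sesquilinear pairing on `Iπ` as `x a ȳ` for a
unique `a`, and hermitian symmetry of `x a ȳ` becomes `ā = a`.
-/

open MonoidAlgebra

section Conjugation

variable {π : Type} [Group π]

@[simp]
lemma conjGR_single (g : π) (n : ℤ) : conjGR π (single g n) = single g⁻¹ n := by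
  simp [conjGR, Finsupp.equivMapDomain_single]

@[simp]
lemma conjGR_zero : conjGR π (0 : ℤ[π]) = 0 := by
  simp [conjGR]

lemma conjGR_add (x y : ℤ[π]) : conjGR π (x + y) = conjGR π x + conjGR π y := by
  simp [conjGR, ← Finsupp.domCongr_apply]

@[simp]
lemma conjGR_conjGR (x : ℤ[π]) : conjGR π (conjGR π x) = x := by
  induction x using MonoidAlgebra.induction_linear with
  | zero => rfl
  | add x y hx hy => rw [conjGR_add, conjGR_add, hx, hy]
  | single g n => simp

lemma conjGR_mul (x y : ℤ[π]) : conjGR π (x * y) = conjGR π y * conjGR π x := by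
  induction x using MonoidAlgebra.induction_linear with
  | zero => simp
  | add x x' hx hx' => rw [add_mul, conjGR_add, hx, hx', conjGR_add, mul_add]
  | single g m =>
    induction y using MonoidAlgebra.induction_linear with
    | zero => simp
    | add y y' hy hy' => rw [mul_add, conjGR_add, hy, hy', conjGR_add, add_mul]
    | single h n => simp [single_mul_single, mul_comm m n]

lemma conjGR_mul_mul_conjGR (x a y : ℤ[π]) :
    conjGR π (x * a * conjGR π y) = y * conjGR π a * conjGR π x := by
  rw [conjGR_mul, conjGR_mul, conjGR_conjGR, mul_assoc]

end Conjugation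

section AugmentationIdeal

variable {π : Type} [Group π]

@[simp]
lemma aug_single (g : π) (n : ℤ) : aug π (single g n) = n := by
  simp [aug]

lemma single_sub_one_mem_Ipi (g : π) : single g (1 : ℤ) - 1 ∈ Ipi π := by
  simp [Ipi, RingHom.mem_ker]

lemma sub_aug_smul_one_mem_span (x : ℤ[π]) :
    x - aug π x • (1 : ℤ[π]) ∈
      Ideal.span (Set.range fun g : π => single g (1 : ℤ) - 1) := by
  induction x using MonoidAlgebra.induction_linear with
  | zero => simp
  | add x y hx hy =>
    rw [map_add, add_smul, add_sub_add_comm]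
    exact add_mem hx hy
  | single g n =>
    rw [aug_single, show single g n - n • (1 : ℤ[π]) = n • (single g 1 - 1) by
      rw [smul_sub, smul_single, smul_eq_mul, mul_one]]
    exact Submodule.smul_of_tower_mem _ n (Ideal.subset_span ⟨g, rfl⟩)

lemma Ipi_eq_span : Ipi π = Ideal.span (Set.range fun g : π => single g (1 : ℤ) - 1) := by
  refine le_antisymm (fun x hx => ?_)
    (Ideal.span_le.2 (Set.range_subset_iff.2 single_sub_one_mem_Ipi))
  simpa [(RingHom.mem_ker).1 hx] using sub_aug_smul_one_mem_span x

/-- `c₁ - c₂` is fixed by left multiplication by every `g`, so its coefficients are constant;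
finiteness of its support in the infinite group `π` forces them to vanish. -/
lemma eq_of_forall_Ipi_mul_eq [Infinite π] {c₁ c₂ : ℤ[π]}
    (h : ∀ x : Ipi π, (x : ℤ[π]) * c₁ = x * c₂) : c₁ = c₂ := by
  set c := c₁ - c₂
  have hinv : ∀ g : π, single g (1 : ℤ) * c = c := fun g => by
    have := h ⟨_, single_sub_one_mem_Ipi g⟩
    rwa [← sub_eq_zero, ← mul_sub, sub_mul, one_mul, sub_eq_zero] at this
  have hconst : ∀ g : π, c.coeff g = c.coeff 1 := fun g => by
    simpa using (congrArg (fun z : ℤ[π] => z.coeff g) (hinv g)).symm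
  obtain ⟨g, hg⟩ := Infinite.exists_notMem_finset c.coeff.support
  rw [← sub_eq_zero, ← coeff_inj]
  ext k
  rw [hconst k, ← hconst g, Finsupp.notMem_support_iff.1 hg, coeff_zero, Finsupp.coe_zero,
    Pi.zero_apply]

lemma eq_of_forall_Ipi_mul_mul_conjGR_eq [Infinite π] {a b : ℤ[π]}
    (h : ∀ x y : Ipi π, (x : ℤ[π]) * a * conjGR π y = x * b * conjGR π y) : a = b := by
  have hright : ∀ y : Ipi π, a * conjGR π y = b * conjGR π y := fun y =>
    eq_of_forall_Ipi_mul_eq fun x => by simpa only [mul_assoc] using h x y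
  have hconj : conjGR π a = conjGR π b := eq_of_forall_Ipi_mul_eq fun y => by
    simpa only [conjGR_mul, conjGR_conjGR] using congrArg (conjGR π) (hright y)
  simpa using congrArg (conjGR π) hconj

end AugmentationIdeal

section Cohomology

open Representation groupCohomology

variable {π : Type} [Group π]

lemma ofMulAction_self_eq_single_mul (g : π) (v : ℤ[π]) :
    ofMulAction ℤ π π g v = single g 1 * v := by
  induction v using MonoidAlgebra.induction_linear with
  | zero => simp
  | add v w hv hw => rw [map_add, hv, hw, mul_add]
  | single h n => simp [single_mul_single]

noncomputable def crossedHom (φ : Ipi π →ₗ[ℤ[π]] ℤ[π]) (g : π) : ℤ[π] :=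
  φ ⟨single g 1 - 1, single_sub_one_mem_Ipi g⟩

lemma crossedHom_mem_cocycles₁ (φ : Ipi π →ₗ[ℤ[π]] ℤ[π]) :
    crossedHom φ ∈ cocycles₁ (Rep.of (ofMulAction ℤ π π)) := by
  rw [mem_cocycles₁_iff]
  intro g h
  change crossedHom φ (g * h) = ofMulAction ℤ π π g (crossedHom φ h) + crossedHom φ g
  rw [ofMulAction_self_eq_single_mul, crossedHom, crossedHom, crossedHom,
    ← smul_eq_mul (single g (1 : ℤ)), ← map_smul, ← map_add]
  congr 1
  apply Subtype.ext
  simp only [Submodule.coe_add, Submodule.coe_smul, smul_eq_mul, mul_sub, single_mul_single,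
    mul_one, sub_add_sub_cancel]

lemma exists_eq_mul_of_linearMap_Ipi
    (hH1 : ∀ x y : groupCohomology (Rep.of (ofMulAction ℤ π π)) 1, x = y)
    (φ : Ipi π →ₗ[ℤ[π]] ℤ[π]) : ∃ m : ℤ[π], ∀ x : Ipi π, φ x = x * m := by
  obtain ⟨m, hm⟩ := (H1π_eq_zero_iff ⟨_, crossedHom_mem_cocycles₁ φ⟩).1 (hH1 _ _)
  have hgen : ∀ g : π, crossedHom φ g = (single g 1 - 1) * m := fun g => by
    refine (congrFun hm g).symm.trans ?_
    rw [d₀₁_hom_apply, sub_mul, one_mul, ← ofMulAction_self_eq_single_mul]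
  refine ⟨m, fun ⟨x, hx⟩ => ?_⟩
  have hspan := hx
  rw [Ipi_eq_span] at hspan
  induction hspan using Submodule.span_induction with
  | mem x hgen' =>
    obtain ⟨g, rfl⟩ := hgen'
    exact hgen g
  | zero => exact (map_zero φ).trans (zero_mul m).symm
  | add x y hx' hy' ihx ihy =>
    have hx := Ipi_eq_span.ge hx'
    have hy := Ipi_eq_span.ge hy'
    change φ (⟨x, hx⟩ + ⟨y, hy⟩) = (x + y) * m
    rw [map_add, ihx hx, ihy hy, add_mul]
  | smul a x hx' ihx =>
    have hx := Ipi_eq_span.ge hx'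
    change φ (a • ⟨x, hx⟩) = (a * x) * m
    rw [map_smul, ihx hx, smul_eq_mul, mul_assoc]

end Cohomology

lemma IsSesq.exists_eq_mul_mul_conjGR {π : Type} [Group π] [Infinite π]
    (hH1 : ∀ x y : groupCohomology (Rep.of (Representation.ofMulAction ℤ π π)) 1, x = y)
    {lam : Ipi π → Ipi π → ℤ[π]} (hlam : IsSesq π lam) :
    ∃ a : ℤ[π], ∀ x y : Ipi π, lam x y = x * a * conjGR π y := by
  obtain ⟨hadd_left, hadd_right, hsmul_left, hsmul_right⟩ := hlam
  have hleft : ∀ y, ∃ c : ℤ[π], ∀ x : Ipi π, lam x y = x * c := fun y =>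
    exists_eq_mul_of_linearMap_Ipi hH1
      { toFun := (lam · y), map_add' := (hadd_left · · y), map_smul' := (hsmul_left · · y) }
  choose c hc using hleft
  have hc_add : ∀ y y', c (y + y') = c y + c y' := fun y y' =>
    eq_of_forall_Ipi_mul_eq fun x => by rw [mul_add, ← hc, ← hc, ← hc, hadd_right]
  have hc_smul : ∀ (a : ℤ[π]) y, c (a • y) = c y * conjGR π a := fun a y =>
    eq_of_forall_Ipi_mul_eq fun x => by rw [← mul_assoc, ← hc, ← hc, hsmul_right]
  obtain ⟨d, hd⟩ := exists_eq_mul_of_linearMap_Ipi hH1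
    { toFun := fun y => conjGR π (c y)
      map_add' := fun y y' => by rw [hc_add, conjGR_add]
      map_smul' := fun a y => by rw [hc_smul, conjGR_mul, conjGR_conjGR]; rfl }
  refine ⟨conjGR π d, fun x y => ?_⟩
  rw [hc, mul_assoc, ← conjGR_mul, ← hd]
  exact (congrArg _ (conjGR_conjGR _)).symm

/-- Let `π` be an infinite group with `H¹(π; ℤπ) = 0` (coefficients in the left
regular representation).  Every sesquilinear pairing on `Iπ` extends uniquely to
a sesquilinear pairing on `ℤπ`; under the identification of pairings on `ℤπ`
with elements `a ∈ ℤπ` (via `λ(x,y) = x·a·ȳ`, i.e. evaluation at `(1,1)`), the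
involution `f ↦ f*` corresponds to `a ↦ ā`, and hermitian pairings on `Iπ`
correspond exactly to the elements `a` with `ā = a`. -/
theorem pairings_on_augmentation_ideal (π : Type) [Group π] [Infinite π]
    (hH1 : ∀ x y : groupCohomology (Rep.of (Representation.ofMulAction ℤ π π)) 1,
      x = y) :
    (∀ lam : ↥(Ipi π) → ↥(Ipi π) → MonoidAlgebra ℤ π, IsSesq π lam →
      ∃! a : MonoidAlgebra ℤ π, ∀ x y : ↥(Ipi π),
        lam x y = (x : MonoidAlgebra ℤ π) * a * conjGR π (y : MonoidAlgebra ℤ π))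
    ∧ (∀ a : MonoidAlgebra ℤ π,
        IsHermitian π (fun x y : ↥(Ipi π) =>
          (x : MonoidAlgebra ℤ π) * a * conjGR π (y : MonoidAlgebra ℤ π))
        ↔ conjGR π a = a) := by
  refine ⟨fun lam hlam => ?_, fun a => ⟨fun hherm => ?_, fun hself x y => ?_⟩⟩
  · obtain ⟨a, ha⟩ := hlam.exists_eq_mul_mul_conjGR hH1
    exact ⟨a, ha, fun b hb =>
      eq_of_forall_Ipi_mul_mul_conjGR_eq fun x y => (hb x y).symm.trans (ha x y)⟩
  · exact eq_of_forall_Ipi_mul_mul_conjGR_eq fun x y => by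
      rw [← conjGR_mul_mul_conjGR, ← hherm]
  · rw [conjGR_mul_mul_conjGR, hself]
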